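/- Let w ∈ A_{2n+1}(132) and let w' ∈ A_{2n}(132) be obtained by deleting the final entry (which is 1) and decrementing all other entries. If p is a pattern ending in its minimum entry 1 and p' is obtained from p by deleting that final 1 and decrementing, then w avoids p iff w' avoids p'; if p does not end in 1, then w avoids p iff w' avoids p. Hence a_{2n+1}(132, p_1,...,p_i, q_1,...,q_j) = a_{2n}(132, p_1',...,p_i', q_1,...,q_j) for patterns p_1,...,p_i ending in 1 and q_1,...,q_j not ending in 1. -/

import Mathlib

open Equiv

/-- The word `w` contains the pattern `p`: some subsequence of `w` is
order-isomorphic to `p`. -/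
def Contains {α β : Type*} [LT α] [LT β] {n k : ℕ} (w : Fin n → α) (p : Fin k → β) : Prop :=
  ∃ f : Fin k → Fin n, StrictMono f ∧ ∀ i j : Fin k, p i < p j ↔ w (f i) < w (f j)

/-- The pattern 132 (written with 0-indexed values as (0,2,1)). -/
def pat132 : Fin 3 → ℕ := ![0, 2, 1]

/-- `w` avoids the pattern 132. -/
def Avoids132 {n : ℕ} (w : Equiv.Perm (Fin n)) : Prop :=
  ¬ Contains (fun i => w i) pat132

/-- Pattern containment between permutations. -/
def ContainsP {n k : ℕ} (w : Equiv.Perm (Fin n)) (p : Equiv.Perm (Fin k)) : Prop :=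
  Contains (fun i => w i) (fun i => p i)

/-- `w` is (up-down) alternating: `w 0 < w 1 > w 2 < w 3 > ⋯` (0-indexed). -/
def Alternating {m : ℕ} (w : Equiv.Perm (Fin m)) : Prop :=
  ∀ i : ℕ, ∀ h : i + 1 < m,
    (i % 2 = 0 → w ⟨i, by omega⟩ < w ⟨i + 1, h⟩) ∧
    (i % 2 = 1 → w ⟨i + 1, h⟩ < w ⟨i, by omega⟩)

/-- The even-indexed (in 1-indexed terms: `w₂, w₄, …, w₂ₙ`) entries of `w`
are order-isomorphic to `u`. -/
def OrderIsoEven {n : ℕ} (w : Equiv.Perm (Fin (2 * n + 1))) (u : Equiv.Perm (Fin n)) : Prop :=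
  ∀ i j : Fin n, u i < u j ↔
    w ⟨2 * (i : ℕ) + 1, by have := i.isLt; omega⟩ < w ⟨2 * (j : ℕ) + 1, by have := j.isLt; omega⟩

/-!
All entries of `w` except the final `1` exceed it. Hence an occurrence in `w` of a
pattern whose last entry is not its minimum can never use that final entry, whereas an occurrence
of a pattern ending in its minimum can always be taken to end there; in both cases deleting the
final entry of `w` (and of the pattern, in the second case) matches occurrences bijectively.
An alternating 132-avoiding permutation of odd length does end in its minimum: if `1` stood
anywhere else it would sit at a valley, followed by a peak `b` and then some `c` with `1 < c < b`,
and `1 b c` would be a 132.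
So deleting the final entry is a bijection `A_{2n+1}(132, …) → A_{2n}(132, …)`.
-/

section Words

variable {α α' β β' : Type*} {n N k : ℕ}

theorem contains_congr_left [LT α] [LT α'] [LT β] {u : Fin n → α} {v : Fin n → α'}
    {p : Fin k → β} (h : ∀ i j, u i < u j ↔ v i < v j) : Contains u p ↔ Contains v p :=
  exists_congr fun _ => and_congr_right fun _ => forall₂_congr fun _ _ => by rw [h]

theorem contains_congr_right [LT α] [LT β] [LT β'] {w : Fin N → α} {p : Fin k → β}
    {q : Fin k → β'} (h : ∀ i j, p i < p j ↔ q i < q j) : Contains w p ↔ Contains w q :=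
  exists_congr fun _ => and_congr_right fun _ => forall₂_congr fun _ _ => by rw [h]

theorem Contains.of_comp [LT α] [LT β] {w : Fin N → α} {e : Fin n → Fin N} (he : StrictMono e)
    {p : Fin k → β} : Contains (w ∘ e) p → Contains w p :=
  fun ⟨f, hf, hiso⟩ => ⟨e ∘ f, he.comp hf, hiso⟩

theorem contains_init_of_ne_last [LT α] [LT β] {w : Fin (N + 1) → α} {p : Fin k → β}
    {f : Fin k → Fin (N + 1)} (hf : StrictMono f) (hiso : ∀ i j, p i < p j ↔ w (f i) < w (f j))
    (hne : ∀ i, f i ≠ Fin.last N) : Contains (Fin.init w) p :=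
  ⟨fun i => (f i).castPred (hne i), fun _ _ hij => Fin.castPred_lt_castPred_iff.mpr (hf hij),
    by simpa [Fin.init] using hiso⟩

variable [Preorder α] [Preorder β]

theorem contains_iff_contains_init {w : Fin (N + 1) → α}
    (hw : ∀ i : Fin N, w (Fin.last N) < w i.castSucc)
    {p : Fin (k + 1) → β} (hp : ∃ i, p i < p (Fin.last k)) :
    Contains w p ↔ Contains (Fin.init w) p := by
  refine ⟨fun ⟨f, hf, hiso⟩ => contains_init_of_ne_last hf hiso fun i => ?_,
    Contains.of_comp Fin.strictMono_castSucc⟩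
  obtain ⟨i₀, hi₀⟩ := hp
  have hlast : f (Fin.last k) ≠ Fin.last N := by
    intro hfl
    have hlt : w (f i₀) < w (Fin.last N) := hfl ▸ (hiso _ _).mp hi₀
    have hi₀ : f i₀ ≠ Fin.last N :=
      hfl ▸ (hf (Fin.lt_last_iff_ne_last.mpr (by rintro rfl; exact lt_irrefl _ hi₀))).ne
    exact lt_asymm hlt (by simpa using hw ((f i₀).castPred hi₀))
  exact ne_of_lt ((hf.monotone (Fin.le_last i)).trans_lt (Fin.lt_last_iff_ne_last.mpr hlast))

theorem contains_iff_contains_init_init {w : Fin (N + 1) → α}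
    (hw : ∀ i : Fin N, w (Fin.last N) < w i.castSucc)
    {p : Fin (k + 1) → β} (hp : ∀ i : Fin k, p (Fin.last k) < p i.castSucc) :
    Contains w p ↔ Contains (Fin.init w) (Fin.init p) := by
  constructor
  · rintro ⟨f, hf, hiso⟩
    exact contains_init_of_ne_last (hf.comp Fin.strictMono_castSucc) (fun i j => hiso _ _)
      fun i => ((hf (Fin.castSucc_lt_last i)).trans_le (Fin.le_last _)).ne
  · rintro ⟨g, hg, hiso⟩
    refine ⟨Fin.lastCases (Fin.last N) fun j => (g j).castSucc, fun i j hij => ?_, fun i j => ?_⟩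
    · induction j using Fin.lastCases with
      | last =>
        induction i using Fin.lastCases with
        | last => exact absurd hij (lt_irrefl _)
        | cast i => simp
      | cast j =>
        induction i using Fin.lastCases with
        | last => exact absurd hij (not_lt.mpr (Fin.le_last _))
        | cast i => simpa using hg (by simpa using hij)
    · induction i using Fin.lastCases <;> induction j using Fin.lastCases <;>
        simp only [Fin.lastCases_last, Fin.lastCases_castSucc, lt_irrefl, hp, hw]
      · exact iff_of_false (hp _).not_gt (hw _).not_gt
      · exact hiso _ _

theorem contains_pat132 {w : Fin N → α} {a b c : Fin N} (hab : a < b) (hbc : b < c)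
    (hac : w a < w c) (hcb : w c < w b) : Contains w pat132 := by
  refine ⟨![a, b, c], Fin.strictMono_iff_lt_succ.mpr fun i => ?_, fun i j => ?_⟩
  · fin_cases i <;> simpa
  · have hab' := hac.trans hcb
    fin_cases i <;> fin_cases j <;>
      simp [pat132, hac, hcb, hab', hac.not_gt, hcb.not_gt, hab'.not_gt]

end Words

section Perms

variable {m : ℕ}

def IsMinDeletion (P : Perm (Fin (m + 1))) (P' : Perm (Fin m)) : Prop :=
  ∀ i, (P' i : ℕ) + 1 = P i.castSucc

namespace IsMinDeletion

variable {P P₁ P₂ : Perm (Fin (m + 1))} {P' P₁' P₂' : Perm (Fin m)}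

theorem lt_iff (h : IsMinDeletion P P') (i j : Fin m) :
    P' i < P' j ↔ P i.castSucc < P j.castSucc := by
  rw [Fin.lt_def, Fin.lt_def, ← h i, ← h j, Nat.add_lt_add_iff_right]

theorem apply_last (h : IsMinDeletion P P') : P (Fin.last m) = 0 := by
  obtain ⟨j, hj⟩ := P.surjective 0
  induction j using Fin.lastCases with
  | last => exact hj
  | cast j => exact absurd (h j) (by simp [hj])

theorem last_lt (h : IsMinDeletion P P') (i : Fin m) : P (Fin.last m) < P i.castSucc := by
  rw [h.apply_last, Fin.lt_def, ← h i]
  exact Nat.succ_pos _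

theorem right_unique (h₁ : IsMinDeletion P P₁') (h₂ : IsMinDeletion P P₂') : P₁' = P₂' :=
  Equiv.ext fun i => Fin.ext (by have := h₁ i; have := h₂ i; omega)

theorem left_unique (h₁ : IsMinDeletion P₁ P') (h₂ : IsMinDeletion P₂ P') : P₁ = P₂ := by
  refine Equiv.ext fun i => ?_
  induction i using Fin.lastCases with
  | last => rw [h₁.apply_last, h₂.apply_last]
  | cast i => exact Fin.ext (by have := h₁ i; have := h₂ i; omega)

end IsMinDeletion

def extendMin (u : Perm (Fin m)) : Perm (Fin (m + 1)) :=
  (finSuccEquivLast.trans u.optionCongr).trans (finSuccEquiv m).symm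

theorem isMinDeletion_extendMin (u : Perm (Fin m)) : IsMinDeletion (extendMin u) u := by
  intro i
  simp [extendMin, finSuccEquivLast_castSucc, finSuccEquiv_symm_some]

theorem exists_isMinDeletion {v : Perm (Fin (m + 1))} (hv : v (Fin.last m) = 0) :
    ∃ u, IsMinDeletion v u := by
  set σ : Perm (Option (Fin m)) := (finSuccEquivLast.symm.trans v).trans (finSuccEquiv m)
  have hσ : σ none = none := by simp [σ, hv]
  refine ⟨Equiv.removeNone σ, fun i => ?_⟩
  have hsome : ∃ x, σ (some i) = some x :=
    Option.ne_none_iff_exists'.mp fun h => Option.some_ne_none i (σ.injective (h.trans hσ.symm))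
  have := Equiv.removeNone_some σ hsome
  simp only [σ, Equiv.trans_apply, finSuccEquivLast_symm_some] at this
  rw [← Fin.val_succ, ← finSuccEquiv_symm_some, this, Equiv.symm_apply_apply]

theorem card_eq_card_of_isMinDeletion {A : Perm (Fin (m + 1)) → Prop} {B : Perm (Fin m) → Prop}
    (hA : ∀ v, A v → v (Fin.last m) = 0) (hAB : ∀ v u, IsMinDeletion v u → (A v ↔ B u)) :
    Nat.card {v // A v} = Nat.card {u // B u} := by
  refine (Nat.card_congr (Equiv.ofBijective
    (fun u : {u // B u} => ⟨extendMin u.1, (hAB _ _ (isMinDeletion_extendMin _)).mpr u.2⟩)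
    ⟨fun u₁ u₂ h => ?_, fun v => ?_⟩)).symm
  · have h : extendMin u₁.1 = extendMin u₂.1 := congrArg Subtype.val h
    exact Subtype.ext <| (isMinDeletion_extendMin u₁.1).right_unique
      (h ▸ isMinDeletion_extendMin u₂.1)
  · obtain ⟨u, hu⟩ := exists_isMinDeletion (hA _ v.2)
    exact ⟨⟨u, (hAB _ _ hu).mp v.2⟩, Subtype.ext ((isMinDeletion_extendMin u).left_unique hu)⟩

end Perms

section Transfer

variable {m : ℕ} {w : Perm (Fin (m + 1))} {w' : Perm (Fin m)}

theorem containsP_iff_of_apply_last_ne_zero (h : IsMinDeletion w w') {l : ℕ}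
    {q : Perm (Fin (l + 1))} (hq : q (Fin.last l) ≠ 0) : ContainsP w q ↔ ContainsP w' q := by
  have hq : ∃ i, q i < q (Fin.last l) :=
    ⟨q.symm 0, by rw [q.apply_symm_apply]; exact (Fin.pos_iff_ne_zero' _).mpr hq⟩
  rw [ContainsP, contains_iff_contains_init h.last_lt hq]
  exact (contains_congr_left (v := fun i => w' i) fun i j => (h.lt_iff i j).symm)

theorem containsP_iff_of_isMinDeletion (h : IsMinDeletion w w') {k : ℕ}
    {p : Perm (Fin (k + 1))} {p' : Perm (Fin k)} (hp : IsMinDeletion p p') :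
    ContainsP w p ↔ ContainsP w' p' := by
  rw [ContainsP, contains_iff_contains_init_init h.last_lt hp.last_lt]
  exact (contains_congr_right (q := fun i => p' i) fun i j => (hp.lt_iff i j).symm).trans
    (contains_congr_left (v := fun i => w' i) fun i j => (h.lt_iff i j).symm)

theorem avoids132_iff (h : IsMinDeletion w w') : Avoids132 w ↔ Avoids132 w' := by
  rw [Avoids132, Avoids132, contains_iff_contains_init h.last_lt ⟨0, by decide⟩]
  exact not_congr (contains_congr_left (v := fun i => w' i) fun i j => (h.lt_iff i j).symm)

theorem alternating_iff (h : IsMinDeletion w w') (hm : Even m) :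
    Alternating w ↔ Alternating w' := by
  obtain ⟨r, rfl⟩ := hm
  refine ⟨fun hw i hi => ?_, fun hw' i hi => ?_⟩
  · simpa only [h.lt_iff, Fin.castSucc_mk] using hw i (by omega)
  · by_cases hi' : i + 1 < r + r
    · simpa only [h.lt_iff, Fin.castSucc_mk] using hw' i hi'
    · have hlast : (⟨i + 1, hi⟩ : Fin (r + r + 1)) = Fin.last (r + r) :=
        Fin.ext (by simp only [Fin.val_last]; omega)
      exact ⟨fun _ => by omega, fun _ => hlast ▸ h.last_lt ⟨i, by omega⟩⟩

end Transfer

theorem apply_last_eq_zero_of_alternating {n : ℕ} {v : Perm (Fin (2 * n + 1))}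
    (hv : Alternating v) (hv' : Avoids132 v) : v (Fin.last (2 * n)) = 0 := by
  obtain ⟨j, hj⟩ := v.surjective 0
  induction j using Fin.lastCases with
  | last => exact hj
  | cast j =>
    exfalso
    obtain ⟨t, ht | ht⟩ := Nat.even_or_odd' (j : ℕ)
    · have hc : v ⟨j + 2, by omega⟩ ≠ 0 := fun hc =>
        absurd (congrArg Fin.val (v.injective (hc.trans hj.symm))) (by simp)
      refine hv' (contains_pat132 (a := j.castSucc) (b := ⟨j + 1, by omega⟩)
        (c := ⟨j + 2, by omega⟩) (by simp [Fin.lt_def]) (by simp [Fin.lt_def]) ?_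
        ((hv (j + 1) (by omega)).2 (by omega)))
      rw [hj]
      exact (Fin.pos_iff_ne_zero' _).mpr hc
    · have := (hv (2 * t) (by omega)).1 (by omega)
      simp only [show (⟨2 * t + 1, _⟩ : Fin (2 * n + 1)) = j.castSucc from Fin.ext ht.symm,
        hj] at this
      exact Fin.not_lt_zero _ this

theorem stmt19_general (n : ℕ)
    (w : Equiv.Perm (Fin (2 * n + 1)))
    (w' : Equiv.Perm (Fin (2 * n)))
    (hrel : ∀ i : Fin (2 * n), (w' i : ℕ) + 1 = (w i.castSucc : ℕ)) :
    (∀ m : ℕ, ∀ p : Equiv.Perm (Fin (m + 1)), p (Fin.last m) = 0 →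
      ∀ p' : Equiv.Perm (Fin m),
        (∀ i : Fin m, (p' i : ℕ) + 1 = (p i.castSucc : ℕ)) →
        (¬ ContainsP w p ↔ ¬ ContainsP w' p')) ∧
    (∀ l : ℕ, ∀ q : Equiv.Perm (Fin (l + 1)), q (Fin.last l) ≠ 0 →
      (¬ ContainsP w q ↔ ¬ ContainsP w' q)) ∧
    (∀ (ι κ : Type) (ms : ι → ℕ) (ls : κ → ℕ)
        (ps : (i : ι) → Equiv.Perm (Fin (ms i + 1)))
        (_ : ∀ i, ps i (Fin.last (ms i)) = 0)
        (ps' : (i : ι) → Equiv.Perm (Fin (ms i)))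
        (_ : ∀ i, ∀ t : Fin (ms i), (ps' i t : ℕ) + 1 = (ps i t.castSucc : ℕ))
        (qs : (j : κ) → Equiv.Perm (Fin (ls j + 1)))
        (_ : ∀ j, qs j (Fin.last (ls j)) ≠ 0),
      Nat.card {v : Equiv.Perm (Fin (2 * n + 1)) //
          Alternating v ∧ Avoids132 v ∧ (∀ i, ¬ ContainsP v (ps i)) ∧
            ∀ j, ¬ ContainsP v (qs j)} =
      Nat.card {v : Equiv.Perm (Fin (2 * n)) //
          Alternating v ∧ Avoids132 v ∧ (∀ i, ¬ ContainsP v (ps' i)) ∧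
            ∀ j, ¬ ContainsP v (qs j)}) := by
  refine ⟨fun m p _ p' hp' => not_congr (containsP_iff_of_isMinDeletion hrel hp'),
    fun l q hq => not_congr (containsP_iff_of_apply_last_ne_zero hrel hq), ?_⟩
  intro ι κ ms ls ps _ ps' hps' qs hqs
  refine card_eq_card_of_isMinDeletion (fun v hv => apply_last_eq_zero_of_alternating hv.1 hv.2.1)
    fun v u h => ?_
  exact and_congr (alternating_iff h (even_two_mul n)) <| and_congr (avoids132_iff h) <|
    and_congr (forall_congr' fun i => not_congr (containsP_iff_of_isMinDeletion h (hps' i)))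
      (forall_congr' fun j => not_congr (containsP_iff_of_apply_last_ne_zero h (hqs j)))

/-- with `w' ∈ A_{2n}(132)` obtained from `w ∈ A_{2n+1}(132)` by
deleting the final entry (the minimum) and decrementing: if `p` ends in its
minimum and `p'` is obtained from `p` likewise, then `w` avoids `p` iff `w'`
avoids `p'`; if `q` does not end in its minimum, `w` avoids `q` iff `w'`
avoids `q`. Hence
`a_{2n+1}(132, p₁,…,p_i, q₁,…,q_j) = a_{2n}(132, p₁',…,p_i', q₁,…,q_j)`. -/
theorem stmt19 (n : ℕ)
    (w : Equiv.Perm (Fin (2 * n + 1))) (hw : Alternating w ∧ Avoids132 w)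
    (w' : Equiv.Perm (Fin (2 * n))) (hw' : Alternating w' ∧ Avoids132 w')
    (hrel : ∀ i : Fin (2 * n), (w' i : ℕ) + 1 = (w i.castSucc : ℕ)) :
    (∀ m : ℕ, ∀ p : Equiv.Perm (Fin (m + 1)), p (Fin.last m) = 0 →
      ∀ p' : Equiv.Perm (Fin m),
        (∀ i : Fin m, (p' i : ℕ) + 1 = (p i.castSucc : ℕ)) →
        (¬ ContainsP w p ↔ ¬ ContainsP w' p')) ∧
    (∀ l : ℕ, ∀ q : Equiv.Perm (Fin (l + 1)), q (Fin.last l) ≠ 0 →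
      (¬ ContainsP w q ↔ ¬ ContainsP w' q)) ∧
    (∀ (ι κ : Type) (ms : ι → ℕ) (ls : κ → ℕ)
        (ps : (i : ι) → Equiv.Perm (Fin (ms i + 1)))
        (_ : ∀ i, ps i (Fin.last (ms i)) = 0)
        (ps' : (i : ι) → Equiv.Perm (Fin (ms i)))
        (_ : ∀ i, ∀ t : Fin (ms i), (ps' i t : ℕ) + 1 = (ps i t.castSucc : ℕ))
        (qs : (j : κ) → Equiv.Perm (Fin (ls j + 1)))
        (_ : ∀ j, qs j (Fin.last (ls j)) ≠ 0),
      Nat.card {v : Equiv.Perm (Fin (2 * n + 1)) //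
          Alternating v ∧ Avoids132 v ∧ (∀ i, ¬ ContainsP v (ps i)) ∧
            ∀ j, ¬ ContainsP v (qs j)} =
      Nat.card {v : Equiv.Perm (Fin (2 * n)) //
          Alternating v ∧ Avoids132 v ∧ (∀ i, ¬ ContainsP v (ps' i)) ∧
            ∀ j, ¬ ContainsP v (qs j)}) :=
  stmt19_general n w w' hrel
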